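/- arXiv:2207.07755 — 3 statements merged into one kernel-verified Lean document; each statement's English description precedes it below -/
import Mathlib

section
/- Under the uniform decay condition of Assumption 1 with constants D₀, R, if the solution x(t) of ẋ = f(t,x) remains in the ball ‖x(t)‖_∞ ≤ M₀ < R/e for t ∈ [t_0, t_0+T*], then for those t one has ‖x(t)‖_∞ ≤ ‖x₀‖_∞ e^{D₀(t-t_0)/(R-M₀)}. -/
/-!
Grouping the monomials of the vector field by degree `k + 1`, the decay condition and
`‖x‖ ≤ M₀ < R` bound the degree-`(k + 1)` part by `D₀ ‖x‖ M₀ᵏ / Rᵏ⁺¹`; summing the geometric series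
gives the linear bound `‖f(t, x)‖ ≤ D₀ / (R - M₀) · ‖x‖` along the trajectory, and Grönwall's
inequality turns it into the exponential bound.
-/

open Finset Real

theorem summable_and_tsum_sigma_le_of_tsum_fiber_le {β : ℕ → Type*} [∀ k, Finite (β k)]
    {G : (Σ k, β k) → ℝ} (hG : ∀ p, 0 ≤ G p) {b : ℕ → ℝ} (hb : Summable b)
    (hGb : ∀ k, ∑' x, G ⟨k, x⟩ ≤ b k) : Summable G ∧ ∑' p, G p ≤ ∑' k, b k := by
  have hG_sum : Summable G := (summable_sigma_of_nonneg hG).2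
    ⟨fun _ => .of_finite, hb.of_nonneg_of_le (fun _ => tsum_nonneg fun _ => hG _) hGb⟩
  exact ⟨hG_sum, hG_sum.tsum_sigma ▸ hG_sum.sigma.tsum_le_tsum hGb hb⟩

section Monomials

variable {ι : Type*} [Fintype ι]

instance finite_subtype_sum_eq (k : ℕ) : Finite {α : ι → ℕ // ∑ i, α i = k} := by
  classical
  exact Set.Finite.to_subtype <| (piAntidiag univ k).finite_toSet.subset fun α hα =>
    mem_piAntidiag.2 ⟨hα, fun i _ => mem_univ i⟩

theorem abs_prod_pow_le_norm_pow (v : ι → ℝ) (α : ι → ℕ) :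
    |∏ i, v i ^ α i| ≤ ‖v‖ ^ ∑ i, α i := by
  rw [abs_prod, ← prod_pow_eq_pow_sum]
  gcongr with i
  rw [abs_pow]
  gcongr
  exact norm_le_pi_norm v i

def posDegreeEquivSigma : {α : ι → ℕ // 1 ≤ ∑ i, α i} ≃
    Σ k : ℕ, {α : ι → ℕ // ∑ i, α i = k + 1} where
  toFun α := ⟨(∑ i, α.1 i) - 1, α.1, by have := α.2; omega⟩
  invFun p := ⟨p.2.1, by have := p.2.2; omega⟩
  left_inv _ := rfl
  right_inv := fun ⟨k, α, hα⟩ => by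
    obtain rfl : (∑ i, α i) - 1 = k := by omega
    rfl

theorem abs_tsum_mul_monomial_le {a : (ι → ℕ) → ℝ} {D R M : ℝ} (hD : 0 ≤ D) (hMR : M < R)
    (ha : ∀ k, 1 ≤ k → ∑' α : {α : ι → ℕ // ∑ i, α i = k}, |a α| ≤ D / R ^ k)
    {v : ι → ℝ} (hv : ‖v‖ ≤ M) :
    |∑' α : {α : ι → ℕ // 1 ≤ ∑ i, α i}, a α.1 * ∏ i, v i ^ α.1 i| ≤ D / (R - M) * ‖v‖ := by
  have hM : 0 ≤ M := (norm_nonneg v).trans hv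
  have hR : 0 < R := hM.trans_lt hMR
  have hq : M / R < 1 := (div_lt_one hR).2 hMR
  set g := fun α : {α : ι → ℕ // 1 ≤ ∑ i, α i} => a α.1 * ∏ i, v i ^ α.1 i
  set E := posDegreeEquivSigma (ι := ι)
  set b : ℕ → ℝ := fun k => D * ‖v‖ / R * (M / R) ^ k
  have hfiber (k : ℕ) : ∑' x, |g (E.symm ⟨k, x⟩)| ≤ b k := calc
    ∑' x, |g (E.symm ⟨k, x⟩)| ≤ ∑' x : {α : ι → ℕ // ∑ i, α i = k + 1}, |a x| * ‖v‖ ^ (k + 1) :=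
        Summable.tsum_le_tsum (fun x => by
          rw [abs_mul]
          exact mul_le_mul_of_nonneg_left
            ((abs_prod_pow_le_norm_pow v x.1).trans_eq (by rw [x.2])) (abs_nonneg _))
          .of_finite .of_finite
    _ = (∑' x : {α : ι → ℕ // ∑ i, α i = k + 1}, |a x|) * (‖v‖ * ‖v‖ ^ k) := by
        rw [tsum_mul_right, pow_succ']
    _ ≤ D / R ^ (k + 1) * (‖v‖ * M ^ k) := by
        gcongr
        exact ha (k + 1) k.succ_pos
    _ = b k := by
        simp only [b, div_pow]
        field_simp
        ring
  have hb_tsum : ∑' k, b k = D / (R - M) * ‖v‖ := by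
    rw [tsum_mul_left, tsum_geometric_of_lt_one (by positivity) hq]
    field_simp
  have hb : Summable b := (summable_geometric_of_lt_one (by positivity) hq).mul_left _
  obtain ⟨hG, hG_le⟩ := summable_and_tsum_sigma_le_of_tsum_fiber_le
    (G := fun p => |g (E.symm p)|) (fun _ => abs_nonneg _) hb hfiber
  have hg : Summable fun α => |g α| := E.symm.summable_iff.1 hG
  calc |∑' α, g α| ≤ ∑' α, |g α| := by
        simpa only [Real.norm_eq_abs] using norm_tsum_le_tsum_norm (f := g) hg
    _ = ∑' p, |g (E.symm p)| := (E.symm.tsum_eq fun α => |g α|).symm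
    _ ≤ D / (R - M) * ‖v‖ := hb_tsum ▸ hG_le

theorem norm_tsum_mul_monomial_le {κ : Type*} [Fintype κ]
    {a : (ι → ℕ) → κ → ℝ} {D R M : ℝ} (hD : 0 ≤ D) (hMR : M < R)
    (ha : ∀ k, 1 ≤ k → ∑ j, ∑' α : {α : ι → ℕ // ∑ i, α i = k}, |a α j| ≤ D / R ^ k)
    {v : ι → ℝ} (hv : ‖v‖ ≤ M) :
    ‖fun j => ∑' α : {α : ι → ℕ // 1 ≤ ∑ i, α i}, a α.1 j * ∏ i, v i ^ α.1 i‖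
      ≤ D / (R - M) * ‖v‖ := by
  refine (pi_norm_le_iff_of_nonneg ?_).2 fun j => (Real.norm_eq_abs _).trans_le <|
    abs_tsum_mul_monomial_le (a := (a · j)) hD hMR (fun k hk => ?_) hv
  · exact mul_nonneg (div_nonneg hD (sub_nonneg.2 hMR.le)) (norm_nonneg v)
  · exact (single_le_sum (fun j _ => tsum_nonneg fun _ => abs_nonneg _) (mem_univ j)).trans
      (ha k hk)

end Monomials

theorem stmt_8_general (d : ℕ) (t₀ T D₀ R M₀ : ℝ)
    (hD₀ : 0 < D₀) (hR : 0 < R)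
    (hM₀ : M₀ < R / Real.exp 1)
    (c : (Fin d → ℕ) → ℝ → Fin d → ℝ)
    (hdecay : ∀ k : ℕ, 1 ≤ k → ∀ t, t₀ ≤ t →
      ∑ j, ∑' α : {α : Fin d → ℕ // ∑ i, α i = k}, |c α.1 t j| ≤ D₀ / R ^ k)
    (x : ℝ → (Fin d → ℝ)) (x₀ : Fin d → ℝ)
    (hx0 : x t₀ = x₀)
    (hode : ∀ t, t₀ ≤ t → HasDerivAt x
      (fun j => ∑' α : {α : Fin d → ℕ // 1 ≤ ∑ i, α i},
        c α.1 t j * ∏ i, (x t i) ^ (α.1 i)) t)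
    (hbdd : ∀ t, t₀ ≤ t → t ≤ t₀ + T → ‖x t‖ ≤ M₀) :
    ∀ t, t₀ ≤ t → t ≤ t₀ + T →
      ‖x t‖ ≤ ‖x₀‖ * Real.exp (D₀ * (t - t₀) / (R - M₀)) := by
  intro t ht₀ ht
  have hMR : M₀ < R := hM₀.trans_le (div_le_self hR.le (one_le_exp zero_le_one))
  have hfield (s : ℝ) (hs : s ∈ Set.Ico t₀ (t₀ + T)) :
      ‖fun j => ∑' α : {α : Fin d → ℕ // 1 ≤ ∑ i, α i}, c α.1 s j * ∏ i, (x s i) ^ (α.1 i)‖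
        ≤ D₀ / (R - M₀) * ‖x s‖ + 0 := by
    rw [add_zero]
    exact norm_tsum_mul_monomial_le (a := (c · s)) hD₀.le hMR (fun k hk => hdecay k hk s hs.1)
      (hbdd s hs.1 hs.2.le)
  have hgronwall := norm_le_gronwallBound_of_norm_deriv_right_le
    (fun s hs => (hode s hs.1).continuousAt.continuousWithinAt)
    (fun s hs => (hode s hs.1).hasDerivWithinAt) (congrArg norm hx0).le hfield t ⟨ht₀, ht⟩
  rwa [gronwallBound_ε0, div_mul_eq_mul_div] at hgronwall

theorem stmt_8 (d : ℕ) (hd : 1 ≤ d) (t₀ T D₀ R M₀ : ℝ)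
    (hD₀ : 0 < D₀) (hR : 0 < R) (hT : 0 ≤ T)
    (hM₀pos : 0 < M₀) (hM₀ : M₀ < R / Real.exp 1)
    (c : (Fin d → ℕ) → ℝ → Fin d → ℝ)
    (hzero : ∀ t, c 0 t = 0)
    (hdecay : ∀ k : ℕ, 1 ≤ k → ∀ t, t₀ ≤ t →
      ∑ j, ∑' α : {α : Fin d → ℕ // ∑ i, α i = k}, |c α.1 t j| ≤ D₀ / R ^ k)
    (x : ℝ → (Fin d → ℝ)) (x₀ : Fin d → ℝ)
    (hx0 : x t₀ = x₀)
    (hode : ∀ t, t₀ ≤ t → HasDerivAt x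
      (fun j => ∑' α : {α : Fin d → ℕ // 1 ≤ ∑ i, α i},
        c α.1 t j * ∏ i, (x t i) ^ (α.1 i)) t)
    (hbdd : ∀ t, t₀ ≤ t → t ≤ t₀ + T → ‖x t‖ ≤ M₀) :
    ∀ t, t₀ ≤ t → t ≤ t₀ + T →
      ‖x t‖ ≤ ‖x₀‖ * Real.exp (D₀ * (t - t₀) / (R - M₀)) :=
  stmt_8_general d t₀ T D₀ R M₀ hD₀ hR hM₀ c hdecay x x₀ hx0 hode hbdd
end

section
/- Suppose x(t) solves ẋ = f(t,x) in ℝ^d with f(t,0)=0, where f satisfies Assumption 1 with constants D₀, R and Assumption 2 with decay rate μ₀ (Jacobian at 0 time-independent diagonal with diagonal entries ≤ -μ₀). If 0 < ‖x₀‖₂ < R²μ₀/(D₀+Rμ₀), then ‖x(t)‖₂ ≤ ‖x₀‖₂ exp(-(μ₀ - D₀‖x₀‖₂/(R(R-‖x₀‖₂)))(t-t_0)) for all t ≥ t_0; in particular the origin is exponentially attracting from this ball since μ₀ - D₀‖x₀‖₂/(R(R-‖x₀‖₂)) > 0. -/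
/-!
Split the vector field `f(t, ·)` into its homogeneous parts `P_k`. Assumption 1 gives
`∑_j |P_k(y)_j| ≤ D₀ (‖y‖/R)^k`, Assumption 2 says `P_0 = 0` and `P_1(y) = Λ y` with `Λ ≤ -μ₀`,
so summing the geometric tail, for `‖y‖ ≤ r < R`,
`⟪y, f(t, y)⟫ ≤ -μ₀ ‖y‖² + ‖y‖ · D₀ ‖y‖² / (R (R - ‖y‖)) ≤ -(μ₀ - D₀ r / (R (R - r))) ‖y‖²`.
For `r = ‖x₀‖` the rate `K = μ₀ - D₀ r / (R (R - r))` is positive by the smallness assumption.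
Then the velocity points strictly into the ball of radius `‖x₀‖` on its boundary, so the
trajectory stays in that ball, and Grönwall's inequality for `‖x‖²`, whose derivative is at most
`-2K ‖x‖²` there, gives the exponential decay.
-/

open Real
open scoped RealInnerProductSpace

theorem summable_of_summable_tsum_abs_fiber {ι : Type*} (φ : ι → ℕ)
    [hfin : ∀ k, Finite {i // φ i = k}] {g : ι → ℝ}
    (h : Summable fun k => ∑' i : {i // φ i = k}, |g i|) : Summable g := by
  have (k : ℕ) : Finite (φ ⁻¹' {k}) := hfin k
  exact .of_abs <| (summable_partition (s := fun k => φ ⁻¹' {k}) (fun i => abs_nonneg (g i))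
    fun i => ⟨φ i, rfl, fun _ hk => hk.symm⟩).2 ⟨fun _ => .of_finite, h⟩

theorem abs_tsum_le_tsum_abs {ι : Type*} {f : ι → ℝ} (hf : Summable fun i => |f i|) :
    |∑' i, f i| ≤ ∑' i, |f i| := by
  simpa only [Real.norm_eq_abs] using
    norm_tsum_le_tsum_norm (f := f) (by simpa only [Real.norm_eq_abs] using hf)

theorem sum_abs_tsum_le_tsum {ι : Type*} [Fintype ι] {f : ℕ → ι → ℝ} {b : ℕ → ℝ}
    (hb : Summable b) (hf : ∀ k, ∑ j, |f k j| ≤ b k) : ∑ j, |∑' k, f k j| ≤ ∑' k, b k := by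
  have hsumm (j : ι) : Summable fun k => |f k j| :=
    hb.of_nonneg_of_le (fun _ => abs_nonneg _) fun k =>
      (Finset.single_le_sum (fun j _ => abs_nonneg (f k j)) (Finset.mem_univ j)).trans (hf k)
  calc ∑ j, |∑' k, f k j| ≤ ∑ j, ∑' k, |f k j| :=
        Finset.sum_le_sum fun j _ => abs_tsum_le_tsum_abs (hsumm j)
    _ = ∑' k, ∑ j, |f k j| := (Summable.tsum_finsetSum fun j _ => hsumm j).symm
    _ ≤ ∑' k, b k := (summable_sum fun j _ => hsumm j).tsum_le_tsum hf hb

section MultiIndex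

variable {d : ℕ}

instance (k : ℕ) : Finite {α : Fin d → ℕ // ∑ i, α i = k} :=
  Finite.of_injective (β := Finset.Nat.antidiagonalTuple d k)
    (fun α => ⟨α, Finset.Nat.mem_antidiagonalTuple.2 α.2⟩) fun _ _ h =>
      Subtype.ext (Subtype.mk.inj h)

theorem tsum_degree_zero (g : (Fin d → ℕ) → ℝ) :
    ∑' α : {α : Fin d → ℕ // ∑ i, α i = 0}, g α = g 0 :=
  tsum_eq_single (⟨0, by simp⟩ : {α : Fin d → ℕ // ∑ i, α i = 0}) fun α hα =>
    (hα <| Subtype.ext <| funext fun i => Finset.sum_eq_zero_iff.1 α.2 i (Finset.mem_univ i)).elim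

theorem exists_eq_single_of_sum_eq_one {α : Fin d → ℕ} (h : ∑ i, α i = 1) :
    ∃ i, α = Pi.single i 1 := by
  obtain ⟨i, hi⟩ := (Finsupp.sum_eq_one_iff (Finsupp.equivFunOnFinite.symm α)).1
    (by simpa [Finsupp.sum_fintype] using h)
  exact ⟨i, by simpa [← Finsupp.single_eq_pi_single] using congr_arg (⇑) hi⟩

theorem prod_pow_single (y : Fin d → ℝ) (i : Fin d) :
    ∏ j, y j ^ (Pi.single i 1 : Fin d → ℕ) j = y i := by
  rw [Fintype.prod_eq_single i fun j hj => by simp [hj]]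
  simp

theorem abs_prod_pow_le (y : EuclideanSpace ℝ (Fin d)) (α : Fin d → ℕ) :
    |∏ i, y i ^ α i| ≤ ‖y‖ ^ ∑ i, α i := by
  rw [Finset.abs_prod, ← Finset.prod_pow_eq_pow_sum]
  gcongr with i
  rw [abs_pow]
  exact pow_le_pow_left₀ (abs_nonneg _) (PiLp.norm_apply_le y i) _

end MultiIndex

noncomputable section PowerSeriesField

variable {d : ℕ}

def powerSeriesField (a : (Fin d → ℕ) → Fin d → ℝ) (y : EuclideanSpace ℝ (Fin d)) :
    EuclideanSpace ℝ (Fin d) :=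
  WithLp.toLp 2 fun j => ∑' α, a α j * ∏ i, y i ^ α i

def homogeneousPart (a : (Fin d → ℕ) → Fin d → ℝ) (k : ℕ) (y : EuclideanSpace ℝ (Fin d))
    (j : Fin d) : ℝ :=
  ∑' α : {α : Fin d → ℕ // ∑ i, α i = k}, a α j * ∏ i, y i ^ (α : Fin d → ℕ) i

variable {a : (Fin d → ℕ) → Fin d → ℝ} {lam : Fin d → ℝ} {D₀ R : ℝ}
  (y : EuclideanSpace ℝ (Fin d))

theorem homogeneousPart_zero (ha : a 0 = 0) (j : Fin d) : homogeneousPart a 0 y j = 0 := by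
  rw [homogeneousPart, tsum_degree_zero fun α => a α j * ∏ i, y i ^ α i, ha]
  simp

theorem homogeneousPart_one (hlin : ∀ i, a (Pi.single i 1) = Pi.single i (lam i)) (j : Fin d) :
    homogeneousPart a 1 y j = lam j * y j := by
  rw [homogeneousPart, tsum_eq_single ⟨Pi.single j 1, by simp⟩]
  · simp [hlin, prod_pow_single]
  · rintro ⟨α, hα⟩ hne
    obtain ⟨i, rfl⟩ := exists_eq_single_of_sum_eq_one hα
    have hji : j ≠ i := by rintro rfl; exact hne rfl
    simp [hlin, Pi.single_eq_of_ne hji]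

theorem tsum_abs_mul_prod_pow_le (k : ℕ) (j : Fin d) :
    ∑' α : {α : Fin d → ℕ // ∑ i, α i = k}, |a α j * ∏ i, y i ^ (α : Fin d → ℕ) i|
      ≤ (∑' α : {α : Fin d → ℕ // ∑ i, α i = k}, |a α j|) * ‖y‖ ^ k := by
  rw [← tsum_mul_right]
  refine Summable.tsum_le_tsum (fun α => ?_) .of_finite .of_finite
  rw [abs_mul]
  exact (mul_le_mul_of_nonneg_left (abs_prod_pow_le y α) (abs_nonneg _)).trans_eq (by rw [α.2])

theorem abs_homogeneousPart_le (k : ℕ) (j : Fin d) :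
    |homogeneousPart a k y j|
      ≤ (∑' α : {α : Fin d → ℕ // ∑ i, α i = k}, |a α j|) * ‖y‖ ^ k :=
  (abs_tsum_le_tsum_abs .of_finite).trans (tsum_abs_mul_prod_pow_le y k j)

theorem sum_tsum_abs_mul_pow_le
    (hcoef : ∀ k, ∑ j, ∑' α : {α : Fin d → ℕ // ∑ i, α i = k}, |a α j| ≤ D₀ / R ^ k) (k : ℕ) :
    ∑ j, (∑' α : {α : Fin d → ℕ // ∑ i, α i = k}, |a α j|) * ‖y‖ ^ k ≤ D₀ * (‖y‖ / R) ^ k := by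
  rw [← Finset.sum_mul]
  calc _ ≤ D₀ / R ^ k * ‖y‖ ^ k := by gcongr; exact hcoef k
    _ = D₀ * (‖y‖ / R) ^ k := by ring

theorem sum_abs_homogeneousPart_le
    (hcoef : ∀ k, ∑ j, ∑' α : {α : Fin d → ℕ // ∑ i, α i = k}, |a α j| ≤ D₀ / R ^ k) (k : ℕ) :
    ∑ j, |homogeneousPart a k y j| ≤ D₀ * (‖y‖ / R) ^ k :=
  (Finset.sum_le_sum fun j _ => abs_homogeneousPart_le y k j).trans
    (sum_tsum_abs_mul_pow_le y hcoef k)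

theorem hasSum_homogeneousPart
    (hcoef : ∀ k, ∑ j, ∑' α : {α : Fin d → ℕ // ∑ i, α i = k}, |a α j| ≤ D₀ / R ^ k)
    (hR : 0 < R) (hy : ‖y‖ < R) (j : Fin d) :
    HasSum (fun k => homogeneousPart a k y j) (powerSeriesField a y j) := by
  have hbound (k : ℕ) : (∑' α : {α : Fin d → ℕ // ∑ i, α i = k}, |a α j|) * ‖y‖ ^ k
      ≤ D₀ * (‖y‖ / R) ^ k :=
    (Finset.single_le_sum
      (f := fun j => (∑' α : {α : Fin d → ℕ // ∑ i, α i = k}, |a α j|) * ‖y‖ ^ k)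
      (fun j _ => by positivity) (Finset.mem_univ j)).trans (sum_tsum_abs_mul_pow_le y hcoef k)
  have hgeom : Summable fun k => D₀ * (‖y‖ / R) ^ k :=
    (summable_geometric_of_lt_one (by positivity) ((div_lt_one hR).2 hy)).mul_left D₀
  have hsumm : Summable fun α => a α j * ∏ i, y i ^ α i :=
    summable_of_summable_tsum_abs_fiber (fun α => ∑ i, α i) <|
      hgeom.of_nonneg_of_le (fun _ => by positivity) fun k =>
        (tsum_abs_mul_prod_pow_le y k j).trans (hbound k)
  exact hsumm.hasSum.tsum_fiberwise _

theorem sum_abs_powerSeriesField_sub_le (ha : a 0 = 0)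
    (hlin : ∀ i, a (Pi.single i 1) = Pi.single i (lam i))
    (hcoef : ∀ k, ∑ j, ∑' α : {α : Fin d → ℕ // ∑ i, α i = k}, |a α j| ≤ D₀ / R ^ k)
    (hR : 0 < R) (hy : ‖y‖ < R) :
    ∑ j, |powerSeriesField a y j - lam j * y j| ≤ D₀ * ‖y‖ ^ 2 / (R * (R - ‖y‖)) := by
  have htail (j : Fin d) :
      powerSeriesField a y j - lam j * y j = ∑' k, homogeneousPart a (k + 2) y j := by
    rw [((hasSum_nat_add_iff' 2).2 (hasSum_homogeneousPart y hcoef hR hy j)).tsum_eq,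
      Finset.sum_range_succ, Finset.sum_range_one, homogeneousPart_zero y ha,
      homogeneousPart_one y hlin, zero_add]
  have hq : ‖y‖ / R < 1 := (div_lt_one hR).2 hy
  calc ∑ j, |powerSeriesField a y j - lam j * y j|
      = ∑ j, |∑' k, homogeneousPart a (k + 2) y j| := by simp_rw [htail]
    _ ≤ ∑' k, D₀ * (‖y‖ / R) ^ (k + 2) :=
      sum_abs_tsum_le_tsum
        ((summable_nat_add_iff (f := fun k => D₀ * (‖y‖ / R) ^ k) 2).2
          ((summable_geometric_of_lt_one (by positivity) hq).mul_left _))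
        fun k => sum_abs_homogeneousPart_le y hcoef (k + 2)
    _ = D₀ * (‖y‖ / R) ^ 2 * (1 - ‖y‖ / R)⁻¹ := by
      rw [← tsum_geometric_of_lt_one (by positivity) hq, ← tsum_mul_left]
      congr 1 with k
      ring
    _ = D₀ * ‖y‖ ^ 2 / (R * (R - ‖y‖)) := by
      have : R - ‖y‖ ≠ 0 := (sub_pos.2 hy).ne'
      field_simp

theorem inner_powerSeriesField_le {μ₀ r : ℝ} (ha : a 0 = 0)
    (hlin : ∀ i, a (Pi.single i 1) = Pi.single i (lam i)) (hlam : ∀ i, lam i ≤ -μ₀)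
    (hcoef : ∀ k, ∑ j, ∑' α : {α : Fin d → ℕ // ∑ i, α i = k}, |a α j| ≤ D₀ / R ^ k)
    (hD₀ : 0 ≤ D₀) (hR : 0 < R) (hyr : ‖y‖ ≤ r) (hr : r < R) :
    ⟪y, powerSeriesField a y⟫ ≤ -(μ₀ - D₀ * r / (R * (R - r))) * ‖y‖ ^ 2 := by
  have hy : ‖y‖ < R := hyr.trans_lt hr
  have hnorm_sq : ‖y‖ ^ 2 = ∑ j, y j ^ 2 := by simp [EuclideanSpace.norm_sq_eq]
  have hlinear : ∑ j, lam j * y j ^ 2 ≤ -μ₀ * ‖y‖ ^ 2 := by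
    rw [hnorm_sq, Finset.mul_sum]
    exact Finset.sum_le_sum fun j _ => mul_le_mul_of_nonneg_right (hlam j) (sq_nonneg _)
  have hnonlinear : ∑ j, y j * (powerSeriesField a y j - lam j * y j)
      ≤ ‖y‖ * (D₀ * ‖y‖ ^ 2 / (R * (R - ‖y‖))) := by
    calc ∑ j, y j * (powerSeriesField a y j - lam j * y j)
        ≤ ∑ j, ‖y‖ * |powerSeriesField a y j - lam j * y j| :=
          Finset.sum_le_sum fun j _ => (le_abs_self _).trans <| by
            rw [abs_mul, ← Real.norm_eq_abs (y j)]
            exact mul_le_mul_of_nonneg_right (PiLp.norm_apply_le y j) (abs_nonneg _)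
      _ = ‖y‖ * ∑ j, |powerSeriesField a y j - lam j * y j| := Finset.mul_sum _ _ _ |>.symm
      _ ≤ ‖y‖ * (D₀ * ‖y‖ ^ 2 / (R * (R - ‖y‖))) := by
          gcongr
          exact sum_abs_powerSeriesField_sub_le y ha hlin hcoef hR hy
  have hmono : ‖y‖ * (D₀ * ‖y‖ ^ 2 / (R * (R - ‖y‖))) ≤ D₀ * r / (R * (R - r)) * ‖y‖ ^ 2 :=
    calc ‖y‖ * (D₀ * ‖y‖ ^ 2 / (R * (R - ‖y‖))) = D₀ * ‖y‖ / (R * (R - ‖y‖)) * ‖y‖ ^ 2 := by ring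
      _ ≤ D₀ * r / (R * (R - r)) * ‖y‖ ^ 2 := by
        have : 0 ≤ r := (norm_nonneg y).trans hyr
        have : 0 < R - r := sub_pos.2 hr
        gcongr
  calc ⟪y, powerSeriesField a y⟫
      = ∑ j, lam j * y j ^ 2 + ∑ j, y j * (powerSeriesField a y j - lam j * y j) := by
        simp only [PiLp.inner_apply, RCLike.inner_apply, conj_trivial, ← Finset.sum_add_distrib]
        exact Finset.sum_congr rfl fun j _ => by ring
    _ ≤ -(μ₀ - D₀ * r / (R * (R - r))) * ‖y‖ ^ 2 := by linarith

end PowerSeriesField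

section Dissipation

variable {E : Type*} [NormedAddCommGroup E] [InnerProductSpace ℝ E] {x v : ℝ → E} {t₀ : ℝ}

theorem norm_le_norm_of_inner_neg (hx : ∀ t ≥ t₀, HasDerivAt x (v t) t)
    (hv : ∀ t ≥ t₀, ‖x t‖ = ‖x t₀‖ → ⟪x t, v t⟫ < 0) {t : ℝ} (ht : t₀ ≤ t) :
    ‖x t‖ ≤ ‖x t₀‖ := by
  have hderiv (τ : ℝ) (hτ : t₀ ≤ τ) : HasDerivAt (‖x ·‖ ^ 2) (2 * ⟪x τ, v τ⟫) τ :=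
    (hx τ hτ).norm_sq
  have hsq : ‖x t‖ ^ 2 ≤ ‖x t₀‖ ^ 2 :=
    image_le_of_deriv_right_lt_deriv_boundary (B := fun _ => ‖x t₀‖ ^ 2) (B' := 0)
      (fun τ hτ => (hderiv τ hτ.1).continuousAt.continuousWithinAt)
      (fun τ hτ => (hderiv τ hτ.1).hasDerivWithinAt) le_rfl (fun _ => hasDerivAt_const _ _)
      (fun τ hτ heq => by
        have := hv τ hτ.1 ((pow_left_inj₀ (norm_nonneg _) (norm_nonneg _) two_ne_zero).1 heq)
        simp only [Pi.zero_apply]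
        linarith)
      ⟨ht, le_rfl⟩
  exact (pow_le_pow_iff_left₀ (norm_nonneg _) (norm_nonneg _) two_ne_zero).1 hsq

theorem norm_le_mul_exp_of_inner_le {K : ℝ} (hK : 0 < K) (hx₀ : 0 < ‖x t₀‖)
    (hx : ∀ t ≥ t₀, HasDerivAt x (v t) t)
    (hv : ∀ t ≥ t₀, ‖x t‖ ≤ ‖x t₀‖ → ⟪x t, v t⟫ ≤ -K * ‖x t‖ ^ 2) {t : ℝ} (ht : t₀ ≤ t) :
    ‖x t‖ ≤ ‖x t₀‖ * exp (-K * (t - t₀)) := by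
  have hball (τ : ℝ) (hτ : t₀ ≤ τ) : ‖x τ‖ ≤ ‖x t₀‖ :=
    norm_le_norm_of_inner_neg hx (fun τ hτ heq => (hv τ hτ heq.le).trans_lt <| by
      rw [heq]; nlinarith [pow_pos hx₀ 2]) hτ
  have hderiv (τ : ℝ) (hτ : t₀ ≤ τ) : HasDerivAt (‖x ·‖ ^ 2) (2 * ⟪x τ, v τ⟫) τ :=
    (hx τ hτ).norm_sq
  have hsq : ‖x t‖ ^ 2 ≤ ‖x t₀‖ ^ 2 * exp (-(2 * K) * (t - t₀)) := by
    rw [← gronwallBound_ε0]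
    refine le_gronwallBound_of_liminf_deriv_right_le (f := (‖x ·‖ ^ 2)) (b := t)
      (fun τ hτ => (hderiv τ hτ.1).continuousAt.continuousWithinAt)
      (fun τ hτ _ => (hderiv τ hτ.1).hasDerivWithinAt.liminf_right_slope_le) le_rfl
      (fun τ hτ => ?_) t ⟨ht, le_rfl⟩
    have := hv τ hτ.1 (hball τ hτ.1)
    linarith
  refine (pow_le_pow_iff_left₀ (norm_nonneg _) (by positivity) two_ne_zero).1 (hsq.trans_eq ?_)
  rw [mul_pow, ← exp_nat_mul]
  ring_nf

end Dissipation

theorem stmt_15_general (d : ℕ) (t₀ D₀ R μ₀ : ℝ)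
    (hD₀ : 0 < D₀) (hR : 0 < R) (hμ₀ : 0 < μ₀)
    (c : (Fin d → ℕ) → ℝ → Fin d → ℝ)
    (hzero : ∀ t, c 0 t = 0)
    (hdecay : ∀ k : ℕ, 1 ≤ k → ∀ t, t₀ ≤ t →
      ∑ j, ∑' α : {α : Fin d → ℕ // ∑ i, α i = k}, |c α.1 t j| ≤ D₀ / R ^ k)
    (lam : Fin d → ℝ)
    (hjac : ∀ (t : ℝ) (i j : Fin d),
      c (fun i' => if i' = i then 1 else 0) t j = if j = i then lam i else 0)
    (hlam : ∀ i, lam i ≤ -μ₀)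
    (x : ℝ → EuclideanSpace ℝ (Fin d)) (x₀ : EuclideanSpace ℝ (Fin d))
    (hx0 : x t₀ = x₀)
    (hode : ∀ t, t₀ ≤ t → HasDerivAt x
      (WithLp.toLp 2 (fun j => ∑' α : (Fin d → ℕ), c α t j * ∏ i, (x t i) ^ (α i)) :
        EuclideanSpace ℝ (Fin d)) t)
    (hx₀pos : 0 < ‖x₀‖) (hx₀small : ‖x₀‖ < R^2 * μ₀ / (D₀ + R * μ₀)) :
    0 < μ₀ - D₀ * ‖x₀‖ / (R * (R - ‖x₀‖)) ∧
    ∀ t, t₀ ≤ t →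
      ‖x t‖ ≤ ‖x₀‖ * Real.exp (-(μ₀ - D₀ * ‖x₀‖ / (R * (R - ‖x₀‖))) * (t - t₀)) := by
  rw [lt_div_iff₀ (by positivity)] at hx₀small
  have hx₀R : ‖x₀‖ < R := by nlinarith [mul_pos hR hμ₀, mul_nonneg hx₀pos.le hD₀.le]
  have hrate : 0 < μ₀ - D₀ * ‖x₀‖ / (R * (R - ‖x₀‖)) := by
    have : 0 < R - ‖x₀‖ := sub_pos.2 hx₀R
    rw [sub_pos, div_lt_iff₀ (by positivity)]
    nlinarith
  refine ⟨hrate, fun t ht => ?_⟩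
  have hlin (τ : ℝ) (i : Fin d) : c (Pi.single i 1) τ = Pi.single i (lam i) :=
    funext fun j => by
      rw [Pi.single_apply, ← hjac τ i j]
      exact congrArg (c · τ j) (funext fun _ => Pi.single_apply _ _ _)
  have hcoef (τ : ℝ) (hτ : t₀ ≤ τ) (k : ℕ) :
      ∑ j, ∑' α : {α : Fin d → ℕ // ∑ i, α i = k}, |c α τ j| ≤ D₀ / R ^ k := by
    rcases Nat.eq_zero_or_pos k with rfl | hk
    · calc _ = 0 := Finset.sum_eq_zero fun j _ => by
            rw [tsum_degree_zero fun α => |c α τ j|, hzero, Pi.zero_apply, abs_zero]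
        _ ≤ D₀ / R ^ 0 := by simpa using hD₀.le
    · exact hdecay k hk τ hτ
  subst hx0
  exact norm_le_mul_exp_of_inner_le (v := fun τ => powerSeriesField (c · τ) (x τ)) hrate hx₀pos
    hode (fun τ hτ hxτ => inner_powerSeriesField_le (x τ) (hzero τ) (hlin τ) hlam (hcoef τ hτ)
      hD₀.le hR hxτ hx₀R) ht

theorem stmt_15 (d : ℕ) (hd : 1 ≤ d) (t₀ D₀ R μ₀ : ℝ)
    (hD₀ : 0 < D₀) (hR : 0 < R) (hμ₀ : 0 < μ₀)
    (c : (Fin d → ℕ) → ℝ → Fin d → ℝ)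
    (hzero : ∀ t, c 0 t = 0)
    (hdecay : ∀ k : ℕ, 1 ≤ k → ∀ t, t₀ ≤ t →
      ∑ j, ∑' α : {α : Fin d → ℕ // ∑ i, α i = k}, |c α.1 t j| ≤ D₀ / R ^ k)
    (lam : Fin d → ℝ)
    (hjac : ∀ (t : ℝ) (i j : Fin d),
      c (fun i' => if i' = i then 1 else 0) t j = if j = i then lam i else 0)
    (hlam : ∀ i, lam i ≤ -μ₀)
    (x : ℝ → EuclideanSpace ℝ (Fin d)) (x₀ : EuclideanSpace ℝ (Fin d))
    (hx0 : x t₀ = x₀)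
    (hode : ∀ t, t₀ ≤ t → HasDerivAt x
      (WithLp.toLp 2 (fun j => ∑' α : (Fin d → ℕ), c α t j * ∏ i, (x t i) ^ (α i)) :
        EuclideanSpace ℝ (Fin d)) t)
    (hx₀pos : 0 < ‖x₀‖) (hx₀small : ‖x₀‖ < R^2 * μ₀ / (D₀ + R * μ₀)) :
    0 < μ₀ - D₀ * ‖x₀‖ / (R * (R - ‖x₀‖)) ∧
    ∀ t, t₀ ≤ t →
      ‖x t‖ ≤ ‖x₀‖ * Real.exp (-(μ₀ - D₀ * ‖x₀‖ / (R * (R - ‖x₀‖))) * (t - t₀)) :=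
  stmt_15_general d t₀ D₀ R μ₀ hD₀ hR hμ₀ c hzero hdecay lam hjac hlam x x₀ hx0 hode hx₀pos hx₀small
end

section
/- Under Assumptions 1 and 2 with f(t,0)=0, for any solution x(t) with ‖x(t)‖₂ < R, the derivative of the squared Euclidean norm satisfies (1/2)(d/dt)‖x(t)‖₂² ≤ (-μ₀ + D₀‖x(t)‖₂/(R(R-‖x(t)‖₂))) ‖x(t)‖₂². -/
/-!
Along a solution, `½ d/dt ‖x‖² = ⟪x, f(t, x)⟫`. Group the power series of `f` by total degree:
the degree-0 part vanishes and the degree-1 part is `diag λ`, which contributes at most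
`-μ₀ ‖x‖²`. A monomial of degree `k` is at most `‖x‖₂ ^ k` in absolute value because
`|xᵢ| ≤ ‖x‖₂`, so the coefficient decay bounds the terms of degree `≥ 2` by
`‖x‖ · ∑_{k ≥ 2} D₀ (‖x‖ / R) ^ k = D₀ ‖x‖³ / (R (R - ‖x‖))`.
-/

open Finset

section MultiIndex

variable {ι : Type*} [Fintype ι]

theorem abs_prod_pow_le_pow_sum {y : ι → ℝ} {r : ℝ} (hy : ∀ i, |y i| ≤ r) (α : ι → ℕ) :
    |∏ i, y i ^ α i| ≤ r ^ ∑ i, α i := by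
  simp_rw [abs_prod, abs_pow, ← prod_pow_eq_pow_sum]
  gcongr with i
  exact hy i

theorem finite_setOf_sum_eq (k : ℕ) : {α : ι → ℕ | ∑ i, α i = k}.Finite := by
  classical
  exact (piAntidiag univ k).finite_toSet.subset fun α hα => by simpa using hα

theorem exists_eq_piSingle_of_sum_eq_one [DecidableEq ι] {α : ι → ℕ} (h : ∑ i, α i = 1) :
    ∃ i, α = Pi.single i 1 := by
  obtain ⟨i, hi⟩ := (Finsupp.sum_eq_one_iff (Finsupp.equivFunOnFinite.symm α)).mp
    (by rwa [Finsupp.sum_fintype _ _ fun _ => rfl])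
  exact ⟨i, by simpa [← Finsupp.single_eq_pi_single] using congrArg (⇑) hi⟩

theorem hasSum_ite_sum_eq_one [DecidableEq ι] (b : (ι → ℕ) → ℝ) (y : ι → ℝ) :
    HasSum (fun α => if ∑ i, α i = 1 then b α * ∏ i, y i ^ α i else 0)
      (∑ i, b (Pi.single i 1) * y i) := by
  have hinj : Function.Injective fun i : ι => (Pi.single i 1 : ι → ℕ) := by
    intro i i' h
    by_contra hne
    simpa [hne] using congrFun h i
  rw [← hinj.hasSum_iff]
  · convert hasSum_fintype _ with i
    simp [Pi.single_apply]
  · rintro α hα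
    rw [if_neg fun h => hα ((exists_eq_piSingle_of_sum_eq_one h).imp fun i hi => hi.symm)]

theorem hasSum_of_hasSum_degree_one {f : (ι → ℕ) → ℝ} (h0 : f 0 = 0) {s : ℝ}
    (h1 : HasSum (fun α => if ∑ i, α i = 1 then f α else 0) s)
    (h2 : Summable fun α => if 2 ≤ ∑ i, α i then f α else 0) :
    HasSum f (s + ∑' α, if 2 ≤ ∑ i, α i then f α else 0) := by
  convert h1.add h2.hasSum using 1
  funext α
  obtain hα | hα := Nat.eq_zero_or_pos (∑ i, α i)
  · obtain rfl : α = 0 := funext fun i => sum_eq_zero_iff.mp hα i (mem_univ i)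
    simp [h0]
  · split_ifs <;> first | omega | simp

end MultiIndex

theorem hasSum_geometric_tail_two {r : ℝ} (h0 : 0 ≤ r) (h1 : r < 1) (D : ℝ) :
    HasSum (fun k : ℕ => if 2 ≤ k then D * r ^ k else 0) (D * r ^ 2 / (1 - r)) := by
  have hshift : (fun n : ℕ => if 2 ≤ n + 2 then D * r ^ (n + 2) else 0) =
      fun n => D * r ^ 2 * r ^ n := by
    funext n
    rw [if_pos (by omega)]
    ring
  rw [← hasSum_nat_add_iff' 2, hshift]
  simpa [sum_range_succ, div_eq_mul_inv] using
    (hasSum_geometric_of_lt_one h0 h1).mul_left (D * r ^ 2)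

theorem summable_and_tsum_le_of_fiberwise {β γ : Type*} {φ : β → ℝ} (hφ : 0 ≤ φ) (g : β → γ)
    (hfin : ∀ c, (g ⁻¹' {c}).Finite) {b : γ → ℝ} {B : ℝ} (hb : HasSum b B)
    (hle : ∀ c, ∑' x : g ⁻¹' {c}, φ x ≤ b c) : Summable φ ∧ ∑' x, φ x ≤ B := by
  have hfib : Summable fun c => ∑' x : g ⁻¹' {c}, φ x :=
    hb.summable.of_nonneg_of_le (fun c => tsum_nonneg fun x => hφ x) hle
  have hφs : Summable φ := by
    refine (summable_partition hφ (s := fun c => g ⁻¹' {c})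
      fun x => ⟨g x, rfl, fun c hc => hc.symm⟩).mpr ⟨fun c => ?_, hfib⟩
    have := (hfin c).to_subtype
    exact Summable.of_finite
  refine ⟨hφs, ?_⟩
  rw [← (hφs.hasSum.tsum_fiberwise g).tsum_eq, ← hb.tsum_eq]
  exact hfib.tsum_le_tsum hle hb.summable

section PowerSeries

variable {ι : Type*} [Fintype ι] (a : (ι → ℕ) → ι → ℝ)

def majorantTail (u : ℝ) (j : ι) (α : ι → ℕ) : ℝ :=
  if 2 ≤ ∑ i, α i then |a α j| * u ^ ∑ i, α i else 0

variable {a}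

theorem majorantTail_nonneg {u : ℝ} (hu : 0 ≤ u) (j : ι) (α : ι → ℕ) :
    0 ≤ majorantTail a u j α := by
  unfold majorantTail
  split_ifs <;> positivity

theorem summable_majorantTail_and_tsum_le {D R u : ℝ} (hu : 0 ≤ u) (huR : u < R)
    (hdecay : ∀ k, 2 ≤ k → ∑ j, ∑' α : {α : ι → ℕ // ∑ i, α i = k}, |a α.1 j| ≤ D / R ^ k) :
    Summable (fun α => ∑ j, majorantTail a u j α) ∧
      ∑' α, ∑ j, majorantTail a u j α ≤ D * u ^ 2 / (R * (R - u)) := by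
  have hR : 0 < R := hu.trans_lt huR
  have hgeom : HasSum (fun k : ℕ => if 2 ≤ k then D * (u / R) ^ k else 0)
      (D * u ^ 2 / (R * (R - u))) := by
    convert hasSum_geometric_tail_two (by positivity) ((div_lt_one hR).mpr huR) D using 1
    field_simp [(sub_pos.mpr huR).ne']
  refine summable_and_tsum_le_of_fiberwise
    (fun α => sum_nonneg fun j _ => majorantTail_nonneg hu j α) (fun α => ∑ i, α i)
    finite_setOf_sum_eq hgeom fun k => ?_
  change ∑' α : {α : ι → ℕ // ∑ i, α i = k}, ∑ j, majorantTail a u j α ≤ _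
  have hfiber : ∀ α : {α : ι → ℕ // ∑ i, α i = k},
      ∑ j, majorantTail a u j α = if 2 ≤ k then (∑ j, |a α j|) * u ^ k else 0 := by
    rintro ⟨α, rfl⟩
    unfold majorantTail
    split_ifs <;> simp [sum_mul]
  rw [tsum_congr hfiber]
  split_ifs with hk
  · have : Finite {α : ι → ℕ // ∑ i, α i = k} := (finite_setOf_sum_eq k).to_subtype
    calc ∑' α : {α : ι → ℕ // ∑ i, α i = k}, (∑ j, |a α j|) * u ^ k
        = (∑ j, ∑' α : {α : ι → ℕ // ∑ i, α i = k}, |a α.1 j|) * u ^ k := by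
          rw [tsum_mul_right, Summable.tsum_finsetSum fun j _ => Summable.of_finite]
      _ ≤ D / R ^ k * u ^ k := by gcongr; exact hdecay k hk
      _ = D * (u / R) ^ k := by rw [div_pow]; ring
  · simp

theorem inner_powerSeries_le [DecidableEq ι] {D R μ : ℝ} (lam : ι → ℝ)
    (y : EuclideanSpace ℝ ι) (h0 : a 0 = 0)
    (hdecay : ∀ k, 2 ≤ k → ∑ j, ∑' α : {α : ι → ℕ // ∑ i, α i = k}, |a α.1 j| ≤ D / R ^ k)
    (hlin : ∀ i j, a (Pi.single i 1) j = if j = i then lam i else 0)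
    (hlam : ∀ i, lam i ≤ -μ) (hy : ‖y‖ < R) :
    inner ℝ y (WithLp.toLp 2 fun j => ∑' α, a α j * ∏ i, y i ^ α i) ≤
      (-μ + D * ‖y‖ / (R * (R - ‖y‖))) * ‖y‖ ^ 2 := by
  set u := ‖y‖
  have hyj : ∀ j, |y j| ≤ u := fun j => by simpa using PiLp.norm_apply_le y j
  obtain ⟨hmaj, hmaj_le⟩ := summable_majorantTail_and_tsum_le (norm_nonneg y) hy hdecay
  set tail : ι → (ι → ℕ) → ℝ := fun j α =>
    if 2 ≤ ∑ i, α i then a α j * ∏ i, y i ^ α i else 0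
  have htail_le : ∀ j α, ‖tail j α‖ ≤ majorantTail a u j α := by
    intro j α
    simp only [tail, majorantTail, Real.norm_eq_abs]
    split_ifs
    · rw [abs_mul]
      gcongr
      exact abs_prod_pow_le_pow_sum hyj α
    · simp
  have hmaj_j : ∀ j, Summable (majorantTail a u j) := fun j =>
    hmaj.of_nonneg_of_le (majorantTail_nonneg (norm_nonneg y) j)
      fun α => single_le_sum (fun j _ => majorantTail_nonneg (norm_nonneg y) j α) (mem_univ j)
  have hsplit : ∀ j, ∑' α, a α j * ∏ i, y i ^ α i = lam j * y j + ∑' α, tail j α := by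
    intro j
    refine (hasSum_of_hasSum_degree_one (by simp [h0]) ?_
      ((hmaj_j j).of_norm_bounded (htail_le j))).tsum_eq
    simpa [hlin] using hasSum_ite_sum_eq_one (fun α => a α j) y.ofLp
  have hlinear : ∑ j, lam j * y j ^ 2 ≤ -μ * u ^ 2 := by
    calc ∑ j, lam j * y j ^ 2 ≤ ∑ j, -μ * y j ^ 2 := by gcongr with j; exact hlam j
      _ = -μ * u ^ 2 := by simp [u, ← mul_sum, EuclideanSpace.norm_sq_eq]
  have htail : ∑ j, y j * ∑' α, tail j α ≤ u * (D * u ^ 2 / (R * (R - u))) := by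
    calc ∑ j, y j * ∑' α, tail j α ≤ ∑ j, u * ∑' α, majorantTail a u j α := by
          refine sum_le_sum fun j _ => ?_
          calc y j * ∑' α, tail j α ≤ |y j| * ‖∑' α, tail j α‖ := by
                rw [Real.norm_eq_abs, ← abs_mul]; exact le_abs_self _
            _ ≤ u * ∑' α, majorantTail a u j α := by
                gcongr
                · exact hyj j
                · exact tsum_of_norm_bounded (hmaj_j j).hasSum (htail_le j)
      _ = u * ∑' α, ∑ j, majorantTail a u j α := by
          rw [← mul_sum, Summable.tsum_finsetSum fun j _ => hmaj_j j]
      _ ≤ u * (D * u ^ 2 / (R * (R - u))) := by gcongr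
  calc inner ℝ y (WithLp.toLp 2 fun j => ∑' α, a α j * ∏ i, y i ^ α i)
      = ∑ j, lam j * y j ^ 2 + ∑ j, y j * ∑' α, tail j α := by
        simp only [PiLp.inner_apply, hsplit, RCLike.inner_apply, conj_trivial, ← sum_add_distrib]
        exact sum_congr rfl fun j _ => by ring
    _ ≤ -μ * u ^ 2 + u * (D * u ^ 2 / (R * (R - u))) := add_le_add hlinear htail
    _ = (-μ + D * u / (R * (R - u))) * u ^ 2 := by ring

end PowerSeries

theorem stmt_16_general (d : ℕ) (t₀ D₀ R μ₀ : ℝ)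
    (c : (Fin d → ℕ) → ℝ → Fin d → ℝ)
    (hzero : ∀ t, c 0 t = 0)
    (hdecay : ∀ k : ℕ, 1 ≤ k → ∀ t, t₀ ≤ t →
      ∑ j, ∑' α : {α : Fin d → ℕ // ∑ i, α i = k}, |c α.1 t j| ≤ D₀ / R ^ k)
    (lam : Fin d → ℝ)
    (hjac : ∀ (t : ℝ) (i j : Fin d),
      c (fun i' => if i' = i then 1 else 0) t j = if j = i then lam i else 0)
    (hlam : ∀ i, lam i ≤ -μ₀)
    (x : ℝ → EuclideanSpace ℝ (Fin d))
    (hode : ∀ t, t₀ ≤ t → HasDerivAt x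
      (WithLp.toLp 2 (fun j => ∑' α : (Fin d → ℕ), c α t j * ∏ i, (x t i) ^ (α i)) :
        EuclideanSpace ℝ (Fin d)) t) :
    ∀ t, t₀ ≤ t → ‖x t‖ < R →
      (1/2) * deriv (fun s => ‖x s‖^2) t ≤
        (-μ₀ + D₀ * ‖x t‖ / (R * (R - ‖x t‖))) * ‖x t‖^2 := by
  intro t ht hxR
  have hsingle : ∀ i : Fin d, Pi.single i 1 = fun i' => if i' = i then 1 else 0 :=
    fun i => funext (Pi.single_apply i 1)
  have hinner := inner_powerSeries_le (a := fun α => c α t) lam (x t) (hzero t)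
    (fun k hk => hdecay k (by omega) t ht) (fun i j => hsingle i ▸ hjac t i j) hlam hxR
  rw [(hode t ht).norm_sq.deriv]
  linarith

theorem stmt_16 (d : ℕ) (hd : 1 ≤ d) (t₀ D₀ R μ₀ : ℝ)
    (hD₀ : 0 < D₀) (hR : 0 < R) (hμ₀ : 0 < μ₀)
    (c : (Fin d → ℕ) → ℝ → Fin d → ℝ)
    (hzero : ∀ t, c 0 t = 0)
    (hdecay : ∀ k : ℕ, 1 ≤ k → ∀ t, t₀ ≤ t →
      ∑ j, ∑' α : {α : Fin d → ℕ // ∑ i, α i = k}, |c α.1 t j| ≤ D₀ / R ^ k)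
    (lam : Fin d → ℝ)
    (hjac : ∀ (t : ℝ) (i j : Fin d),
      c (fun i' => if i' = i then 1 else 0) t j = if j = i then lam i else 0)
    (hlam : ∀ i, lam i ≤ -μ₀)
    (x : ℝ → EuclideanSpace ℝ (Fin d))
    (hode : ∀ t, t₀ ≤ t → HasDerivAt x
      (WithLp.toLp 2 (fun j => ∑' α : (Fin d → ℕ), c α t j * ∏ i, (x t i) ^ (α i)) :
        EuclideanSpace ℝ (Fin d)) t) :
    ∀ t, t₀ ≤ t → ‖x t‖ < R →
      (1/2) * deriv (fun s => ‖x s‖^2) t ≤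
        (-μ₀ + D₀ * ‖x t‖ / (R * (R - ‖x t‖))) * ‖x t‖^2 :=
  stmt_16_general d t₀ D₀ R μ₀ c hzero hdecay lam hjac hlam x hode
end
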